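/- Let X be a rational Urysohn space. Then there exists an injective group homomorphism φ from the free group of countable rank (the free group on the generating set ℕ) into the group of isometric bijections of X whose image acts homogeneously on X: for every n and all tuples α, β : Fin n → X with dist(α(i), α(j)) = dist(β(i), β(j)) for all i, j, there exists an element w of the free group with φ(w)(α(i)) = β(i) for all i. (Thus the isometry group of X, and hence of its completion, contains a dense free subgroup of countable rank.) -/

import Mathlib

def IsRationalUrysohn (X : Type*) [MetricSpace X] : Prop :=
  Nonempty X ∧ Countable X ∧
    (∀ x y : X, ∃ q : ℚ, dist x y = (q : ℝ)) ∧
    (∀ (A : Finset X) (g : X → ℚ),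
      (∀ a ∈ A, 0 ≤ g a) →
      (∀ a ∈ A, ∀ b ∈ A,
        |(g a : ℝ) - (g b : ℝ)| ≤ dist a b ∧ dist a b ≤ (g a : ℝ) + (g b : ℝ)) →
      ∃ z : X, ∀ a ∈ A, dist z a = (g a : ℝ))

namespace Stmt19

variable {X : Type*} [MetricSpace X]

/-- A finite partial isometry, given as a list of (input, output) pairs. -/
def PartIso (P : List (X × X)) : Prop :=
  ∀ p ∈ P, ∀ q ∈ P, dist p.1 q.1 = dist p.2 q.2

theorem PartIso.eq_snd {P : List (X × X)} (h : PartIso P) {a b c : X}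
    (h1 : (a, b) ∈ P) (h2 : (a, c) ∈ P) : b = c := by
  have h0 : dist b c = 0 := by simpa using (h _ h1 _ h2).symm
  exact dist_eq_zero.mp h0

theorem PartIso.eq_fst {P : List (X × X)} (h : PartIso P) {a b c : X}
    (h1 : (a, c) ∈ P) (h2 : (b, c) ∈ P) : a = b := by
  have h0 : dist a b = 0 := by simpa using h _ h1 _ h2
  exact dist_eq_zero.mp h0

theorem extend_dom (hX : IsRationalUrysohn X) {P : List (X × X)} (hP : PartIso P) (x : X) :
    ∃ z : X, PartIso ((x, z) :: P) := by
  classical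
  obtain ⟨-, -, hQ, hExt⟩ := hX
  set f : X → X := fun b => if h : ∃ a, (a, b) ∈ P then h.choose else x with hf
  have hfP : ∀ b : X, (∃ a, (a, b) ∈ P) → (f b, b) ∈ P := by
    intro b h
    simp only [hf, dif_pos h]
    exact h.choose_spec
  set g : X → ℚ := fun b => (hQ x (f b)).choose with hg
  have hgd : ∀ b, (g b : ℝ) = dist x (f b) := fun b => (hQ x (f b)).choose_spec.symm
  have hmem : ∀ b : X, b ∈ (P.map Prod.snd).toFinset ↔ ∃ a, (a, b) ∈ P := by
    intro b
    simp only [List.mem_toFinset, List.mem_map]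
    constructor
    · rintro ⟨p, hp, rfl⟩; exact ⟨p.1, by simpa using hp⟩
    · rintro ⟨a, ha⟩; exact ⟨(a, b), ha, rfl⟩
  have hcond1 : ∀ b ∈ (P.map Prod.snd).toFinset, 0 ≤ g b := by
    intro b hb
    have : (0 : ℝ) ≤ (g b : ℝ) := (hgd b) ▸ dist_nonneg
    exact_mod_cast this
  have hcond2 : ∀ a ∈ (P.map Prod.snd).toFinset, ∀ b ∈ (P.map Prod.snd).toFinset,
      |(g a : ℝ) - (g b : ℝ)| ≤ dist a b ∧ dist a b ≤ (g a : ℝ) + (g b : ℝ) := by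
    intro a ha b hb
    obtain ⟨a1, ha1⟩ := (hmem a).mp ha
    obtain ⟨b1, hb1⟩ := (hmem b).mp hb
    have h1 : (f a, a) ∈ P := hfP a ⟨a1, ha1⟩
    have h2 : (f b, b) ∈ P := hfP b ⟨b1, hb1⟩
    have hd : dist (f a) (f b) = dist a b := hP _ h1 _ h2
    rw [hgd a, hgd b]
    constructor
    · calc |dist x (f a) - dist x (f b)| = |dist (f a) x - dist (f b) x| := by
            rw [dist_comm x (f a), dist_comm x (f b)]
      _ ≤ dist (f a) (f b) := abs_dist_sub_le _ _ _
      _ = dist a b := hd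
    · calc dist a b = dist (f a) (f b) := hd.symm
      _ ≤ dist (f a) x + dist x (f b) := dist_triangle _ _ _
      _ = dist x (f a) + dist x (f b) := by rw [dist_comm x (f a)]
  obtain ⟨z, hz⟩ := hExt (P.map Prod.snd).toFinset g hcond1 hcond2
  refine ⟨z, ?_⟩
  have key : ∀ a b : X, (a, b) ∈ P → dist x a = dist z b := by
    intro a b hab
    have hb : b ∈ (P.map Prod.snd).toFinset := (hmem b).mpr ⟨a, hab⟩
    have h1 : (f b, b) ∈ P := hfP b ⟨a, hab⟩
    have h2 : f b = a := hP.eq_fst h1 hab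
    rw [hz b hb, hgd b, h2]
  intro p hp q hq
  rcases List.mem_cons.mp hp with rfl | hp' <;> rcases List.mem_cons.mp hq with rfl | hq'
  · simp
  · exact key q.1 q.2 (by simpa using hq')
  · have hk := key p.1 p.2 (by simpa using hp')
    rw [dist_comm p.1 x, dist_comm p.2 z]
    exact hk
  · exact hP _ hp' _ hq'

theorem PartIso.swap {P : List (X × X)} (hP : PartIso P) : PartIso (P.map Prod.swap) := by
  intro p hp q hq
  obtain ⟨p', hp', rfl⟩ := List.mem_map.mp hp
  obtain ⟨q', hq', rfl⟩ := List.mem_map.mp hq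
  exact (hP _ hp' _ hq').symm

theorem extend_ran (hX : IsRationalUrysohn X) {P : List (X × X)} (hP : PartIso P) (x : X) :
    ∃ z : X, PartIso ((z, x) :: P) := by
  obtain ⟨z, hz⟩ := extend_dom hX hP.swap x
  refine ⟨z, ?_⟩
  have := hz.swap
  simpa [Function.comp, Prod.swap_swap] using this

theorem fresh (hX : IsRationalUrysohn X) (C : List X) (R : ℚ) (h0 : (0:ℝ) ≤ (R:ℝ))
    (hC : ∀ a ∈ C, ∀ b ∈ C, dist a b ≤ (R:ℝ) + R) :
    ∃ z : X, ∀ a ∈ C, dist z a = (R : ℝ) := by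
  classical
  obtain ⟨-, -, -, hExt⟩ := hX
  have hcond : ∀ a ∈ C.toFinset, ∀ b ∈ C.toFinset,
      |((R:ℚ) : ℝ) - ((R:ℚ) : ℝ)| ≤ dist a b ∧ dist a b ≤ ((R:ℚ) : ℝ) + ((R:ℚ) : ℝ) := by
    intro a ha b hb
    constructor
    · simpa using dist_nonneg
    · exact hC a (List.mem_toFinset.mp ha) b (List.mem_toFinset.mp hb)
  obtain ⟨z, hz⟩ := hExt C.toFinset (fun _ => R) (fun a _ => by exact_mod_cast h0) hcond
  exact ⟨z, fun a ha => hz a (List.mem_toFinset.mpr ha)⟩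

theorem exists_bound (hQ : ∀ x y : X, ∃ q : ℚ, dist x y = (q:ℝ)) (C : List X) :
    ∃ R : ℚ, (0:ℝ) < (R:ℝ) ∧ ∀ a ∈ C, ∀ b ∈ C, dist a b ≤ (R:ℝ) + R := by
  classical
  set s : Finset ℚ := (C.toFinset ×ˢ C.toFinset).image (fun p => (hQ p.1 p.2).choose) with hs
  have hnn : ∀ q ∈ s, (0:ℚ) ≤ q := by
    intro q hq
    obtain ⟨p, hp, rfl⟩ := Finset.mem_image.mp hq
    have : (0:ℝ) ≤ ((hQ p.1 p.2).choose : ℝ) := (hQ p.1 p.2).choose_spec ▸ dist_nonneg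
    exact_mod_cast this
  have hSnn : (0:ℚ) ≤ s.sum id := Finset.sum_nonneg hnn
  refine ⟨s.sum id + 1, by exact_mod_cast (by linarith : (0:ℚ) < s.sum id + 1), ?_⟩
  intro a ha b hb
  have hmem : (hQ a b).choose ∈ s := by
    refine Finset.mem_image.mpr ⟨(a, b), ?_, rfl⟩
    exact Finset.mem_product.mpr ⟨List.mem_toFinset.mpr ha, List.mem_toFinset.mpr hb⟩
  have hle : (hQ a b).choose ≤ s.sum id := Finset.single_le_sum (f := id) hnn hmem
  rw [(hQ a b).choose_spec]
  exact_mod_cast (by linarith : (hQ a b).choose ≤ (s.sum id + 1) + (s.sum id + 1))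

/-- Evaluation of a word of partial isometries along a list of letters. -/
def EvalsTo (P : ℕ → List (X × X)) : List (ℕ × Bool) → X → X → Prop
  | [], x, y => x = y
  | p :: L, x, y => ∃ z, EvalsTo P L x z ∧ cond p.2 ((z, y) ∈ P p.1) ((y, z) ∈ P p.1)

theorem EvalsTo.mono {P P' : ℕ → List (X × X)} (h : ∀ k, P k ⊆ P' k) :
    ∀ {L : List (ℕ × Bool)} {x y : X}, EvalsTo P L x y → EvalsTo P' L x y := by
  intro L
  induction L with
  | nil => intro x y hxy; exact hxy
  | cons p L ih =>
    rintro x y ⟨z, h1, h2⟩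
    refine ⟨z, ih h1, ?_⟩
    cases hb : p.2 <;> rw [hb] at h2 <;> simp only [cond] <;> exact h _ h2

theorem chain (hX : IsRationalUrysohn X) (R : ℚ) (hRpos : (0:ℝ) < (R:ℝ))
    (P : ℕ → List (X × X)) (K : Finset ℕ) (C : List X) (x : X)
    (hP : ∀ k, PartIso (P k))
    (hx : x ∈ C)
    (hC : ∀ a ∈ C, ∀ b ∈ C, dist a b ≤ (R:ℝ) + R)
    (hfr : ∀ a ∈ C, a ≠ x → dist a x = (R:ℝ))
    (hspt : ∀ k ∈ K, ∀ pr ∈ P k, pr.1 ∈ C ∧ pr.2 ∈ C)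
    (hxP : ∀ k ∈ K, ∀ pr ∈ P k, pr.1 ≠ x ∧ pr.2 ≠ x) :
    ∀ L : List (ℕ × Bool),
      List.Chain' (fun p q : ℕ × Bool => p.1 = q.1 → p.2 = q.2) L →
      (∀ p ∈ L, p.1 ∈ K) →
      ∃ (P' : ℕ → List (X × X)) (C' : List X) (y : X),
        (∀ k, P k ⊆ P' k) ∧ (∀ k, PartIso (P' k)) ∧ C ⊆ C' ∧ y ∈ C' ∧
        (∀ a ∈ C', ∀ b ∈ C', dist a b ≤ (R:ℝ) + R) ∧
        (∀ k ∈ K, ∀ pr ∈ P' k, pr.1 ∈ C' ∧ pr.2 ∈ C') ∧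
        (∀ a ∈ C', a ≠ y → dist a y = (R:ℝ)) ∧
        (∀ k ∈ K, ∀ pr ∈ P' k,
          (pr.1 = y → L.head? = some (k, false)) ∧ (pr.2 = y → L.head? = some (k, true))) ∧
        EvalsTo P' L x y ∧
        (L ≠ [] → dist y x = (R:ℝ)) := by
  intro L
  induction L with
  | nil =>
    intro _ _
    refine ⟨P, C, x, fun k => List.Subset.refl _, hP, List.Subset.refl _, hx, hC, hspt, hfr,
      ?_, rfl, fun h => absurd rfl h⟩
    intro k hk pr hpr
    exact ⟨fun h => absurd h (hxP k hk pr hpr).1, fun h => absurd h (hxP k hk pr hpr).2⟩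
  | cons p L ih =>
    obtain ⟨k, b⟩ := p
    intro hred hKL
    obtain ⟨hhead, hred'⟩ := List.isChain_cons.mp hred
    have hk : k ∈ K := hKL (k, b) (List.mem_cons_self)
    obtain ⟨P₁, C₁, z, hsub₁, hP₁, hCC₁, hz₁, hC₁, hspt₁, hfr₁, hhc₁, hev₁, -⟩ :=
      ih hred' (fun p hp => hKL p (List.mem_cons_of_mem _ hp))
    obtain ⟨y, hy⟩ := fresh hX C₁ R hRpos.le hC₁
    have hyC₁ : y ∉ C₁ := by
      intro h
      have : dist y y = (R:ℝ) := hy y h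
      rw [dist_self] at this
      exact hRpos.ne this
    have hyne : ∀ a ∈ C₁, a ≠ y := fun a ha h => hyC₁ (h ▸ ha)
    have factA : ∀ pr ∈ P₁ k, pr.1 = z → b = false := by
      intro pr hpr h
      exact hhead (k, false) ((hhc₁ k hk pr hpr).1 h) rfl
    have factB : ∀ pr ∈ P₁ k, pr.2 = z → b = true := by
      intro pr hpr h
      exact hhead (k, true) ((hhc₁ k hk pr hpr).2 h) rfl
    classical
    have hxC₁ : x ∈ C₁ := hCC₁ hx
    -- branch on the sign of the letter
    cases b with
    | true =>
      refine ⟨Function.update P₁ k ((z, y) :: P₁ k), y :: C₁, y, ?_, ?_, ?_, ?_, ?_, ?_, ?_, ?_, ?_, ?_⟩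
      case _ =>  -- subset
        intro k'
        refine List.Subset.trans (hsub₁ k') ?_
        by_cases h : k' = k
        · rw [h, Function.update_self]; exact List.subset_cons_self _ _
        · rw [Function.update_of_ne h]; exact List.Subset.refl _
      case _ =>  -- PartIso
        intro k'
        by_cases h : k' = k
        · rw [h, Function.update_self]
          have keypr : ∀ q ∈ P₁ k, dist z q.1 = dist y q.2 := by
            intro q hq
            obtain ⟨hq1, hq2⟩ := hspt₁ k hk q hq
            have h1 : q.1 ≠ z := fun h => Bool.noConfusion (factA q hq h)
            rw [dist_comm z q.1, hfr₁ q.1 hq1 h1, hy q.2 hq2]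
          intro p hp q hq
          rcases List.mem_cons.mp hp with rfl | hp' <;> rcases List.mem_cons.mp hq with rfl | hq'
          · simp
          · exact keypr q hq'
          · have hk2 := keypr p hp'
            rw [dist_comm p.1 z, dist_comm p.2 y]
            exact hk2
          · exact hP₁ k _ hp' _ hq'
        · rw [Function.update_of_ne h]; exact hP₁ k'
      case _ => exact List.Subset.trans hCC₁ (List.subset_cons_self _ _)
      case _ => exact List.mem_cons_self
      case _ =>  -- distance bound
        intro a ha b' hb'
        rcases List.mem_cons.mp ha with rfl | ha' <;> rcases List.mem_cons.mp hb' with rfl | hb''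
        · rw [dist_self]; positivity
        · rw [hy b' hb'']; linarith
        · rw [dist_comm, hy a ha']; linarith
        · exact hC₁ a ha' b' hb''
      case _ =>  -- support
        intro k' hk' pr hpr
        by_cases h : k' = k
        · rw [h] at hpr hk'
          rw [Function.update_self] at hpr
          rcases List.mem_cons.mp hpr with rfl | hpr'
          · exact ⟨List.mem_cons_of_mem _ hz₁, List.mem_cons_self⟩
          · obtain ⟨h1, h2⟩ := hspt₁ k hk' pr hpr'
            exact ⟨List.mem_cons_of_mem _ h1, List.mem_cons_of_mem _ h2⟩
        · rw [Function.update_of_ne h] at hpr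
          obtain ⟨h1, h2⟩ := hspt₁ k' hk' pr hpr
          exact ⟨List.mem_cons_of_mem _ h1, List.mem_cons_of_mem _ h2⟩
      case _ =>  -- freshness at y
        intro a ha hne
        rcases List.mem_cons.mp ha with rfl | ha'
        · exact absurd rfl hne
        · rw [dist_comm]; exact hy a ha'
      case _ =>  -- head compatibility
        intro k' hk' pr hpr
        by_cases h : k' = k
        · rw [h] at hpr hk' ⊢
          rw [Function.update_self] at hpr
          rcases List.mem_cons.mp hpr with rfl | hpr'
          · exact ⟨fun h => absurd h.symm (hyne z hz₁).symm, fun _ => rfl⟩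
          · obtain ⟨h1, h2⟩ := hspt₁ k hk' pr hpr'
            exact ⟨fun h => absurd h (hyne _ h1), fun h => absurd h (hyne _ h2)⟩
        · rw [Function.update_of_ne h] at hpr
          obtain ⟨h1, h2⟩ := hspt₁ k' hk' pr hpr
          exact ⟨fun h => absurd h (hyne _ h1), fun h => absurd h (hyne _ h2)⟩
      case _ =>  -- EvalsTo
        have hsub₁₂ : ∀ k', P₁ k' ⊆ Function.update P₁ k ((z, y) :: P₁ k) k' := by
          intro k'
          by_cases h : k' = k
          · rw [h, Function.update_self]; exact List.subset_cons_self _ _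
          · rw [Function.update_of_ne h]; exact List.Subset.refl _
        refine ⟨z, hev₁.mono hsub₁₂, ?_⟩
        show (z, y) ∈ Function.update P₁ k ((z, y) :: P₁ k) k
        rw [Function.update_self]
        exact List.mem_cons_self
      case _ =>
        intro _
        exact hy x hxC₁
    | false =>
      refine ⟨Function.update P₁ k ((y, z) :: P₁ k), y :: C₁, y, ?_, ?_, ?_, ?_, ?_, ?_, ?_, ?_, ?_, ?_⟩
      case _ =>
        intro k'
        refine List.Subset.trans (hsub₁ k') ?_
        by_cases h : k' = k
        · rw [h, Function.update_self]; exact List.subset_cons_self _ _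
        · rw [Function.update_of_ne h]; exact List.Subset.refl _
      case _ =>
        intro k'
        by_cases h : k' = k
        · rw [h, Function.update_self]
          have keypr : ∀ q ∈ P₁ k, dist y q.1 = dist z q.2 := by
            intro q hq
            obtain ⟨hq1, hq2⟩ := hspt₁ k hk q hq
            have h2 : q.2 ≠ z := fun h => Bool.noConfusion (factB q hq h)
            rw [hy q.1 hq1, dist_comm z q.2, hfr₁ q.2 hq2 h2]
          intro p hp q hq
          rcases List.mem_cons.mp hp with rfl | hp' <;> rcases List.mem_cons.mp hq with rfl | hq'
          · simp
          · exact keypr q hq'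
          · have hk2 := keypr p hp'
            rw [dist_comm p.1 y, dist_comm p.2 z]
            exact hk2
          · exact hP₁ k _ hp' _ hq'
        · rw [Function.update_of_ne h]; exact hP₁ k'
      case _ => exact List.Subset.trans hCC₁ (List.subset_cons_self _ _)
      case _ => exact List.mem_cons_self
      case _ =>
        intro a ha b' hb'
        rcases List.mem_cons.mp ha with rfl | ha' <;> rcases List.mem_cons.mp hb' with rfl | hb''
        · rw [dist_self]; positivity
        · rw [hy b' hb'']; linarith
        · rw [dist_comm, hy a ha']; linarith
        · exact hC₁ a ha' b' hb''
      case _ =>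
        intro k' hk' pr hpr
        by_cases h : k' = k
        · rw [h] at hpr hk'
          rw [Function.update_self] at hpr
          rcases List.mem_cons.mp hpr with rfl | hpr'
          · exact ⟨List.mem_cons_self, List.mem_cons_of_mem _ hz₁⟩
          · obtain ⟨h1, h2⟩ := hspt₁ k hk' pr hpr'
            exact ⟨List.mem_cons_of_mem _ h1, List.mem_cons_of_mem _ h2⟩
        · rw [Function.update_of_ne h] at hpr
          obtain ⟨h1, h2⟩ := hspt₁ k' hk' pr hpr
          exact ⟨List.mem_cons_of_mem _ h1, List.mem_cons_of_mem _ h2⟩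
      case _ =>
        intro a ha hne
        rcases List.mem_cons.mp ha with rfl | ha'
        · exact absurd rfl hne
        · rw [dist_comm]; exact hy a ha'
      case _ =>
        intro k' hk' pr hpr
        by_cases h : k' = k
        · rw [h] at hpr hk' ⊢
          rw [Function.update_self] at hpr
          rcases List.mem_cons.mp hpr with rfl | hpr'
          · exact ⟨fun _ => rfl, fun h => absurd h.symm (hyne z hz₁).symm⟩
          · obtain ⟨h1, h2⟩ := hspt₁ k hk' pr hpr'
            exact ⟨fun h => absurd h (hyne _ h1), fun h => absurd h (hyne _ h2)⟩
        · rw [Function.update_of_ne h] at hpr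
          obtain ⟨h1, h2⟩ := hspt₁ k' hk' pr hpr
          exact ⟨fun h => absurd h (hyne _ h1), fun h => absurd h (hyne _ h2)⟩
      case _ =>
        have hsub₁₂ : ∀ k', P₁ k' ⊆ Function.update P₁ k ((y, z) :: P₁ k) k' := by
          intro k'
          by_cases h : k' = k
          · rw [h, Function.update_self]; exact List.subset_cons_self _ _
          · rw [Function.update_of_ne h]; exact List.Subset.refl _
        refine ⟨z, hev₁.mono hsub₁₂, ?_⟩
        show (y, z) ∈ Function.update P₁ k ((y, z) :: P₁ k) k
        rw [Function.update_self]
        exact List.mem_cons_self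
      case _ =>
        intro _
        exact hy x hxC₁

theorem chain'_of_noCancel :
    ∀ L : List (ℕ × Bool),
      (∀ (l₁ : List (ℕ × Bool)) (a : ℕ) (b : Bool) (l₂ : List (ℕ × Bool)),
        L ≠ l₁ ++ (a, b) :: (a, !b) :: l₂) →
      List.Chain' (fun p q : ℕ × Bool => p.1 = q.1 → p.2 = q.2) L := by
  intro L
  induction L with
  | nil => exact fun _ => List.isChain_nil
  | cons p L ih =>
    intro hno
    have htail := ih (fun l₁ a b l₂ h => hno (p :: l₁) a b l₂ (by rw [List.cons_append, h]))
    apply List.isChain_cons.mpr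
    refine ⟨?_, htail⟩
    intro q hq h1
    by_contra h2
    obtain ⟨L', rfl⟩ : ∃ L', L = q :: L' := by
      cases L with
      | nil => simp at hq
      | cons r L' =>
        simp only [List.head?_cons, Option.mem_def, Option.some.injEq] at hq
        exact ⟨L', by rw [hq]⟩
    have hq2 : q.2 = !p.2 := by cases hp2 : p.2 <;> cases hq2 : q.2 <;> simp_all
    have hqe : q = (p.1, !p.2) := Prod.ext h1.symm hq2
    exact hno [] p.1 p.2 L' (by rw [hqe]; simp)

theorem toWord_chain' (w : FreeGroup ℕ) :
    List.Chain' (fun p q : ℕ × Bool => p.1 = q.1 → p.2 = q.2) w.toWord := by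
  apply chain'_of_noCancel
  intro l₁ a b l₂ h
  exact FreeGroup.reduce.not ((FreeGroup.reduce_toWord w).trans h)

theorem kill (hX : IsRationalUrysohn X) (P : ℕ → List (X × X)) (hP : ∀ k, PartIso (P k))
    (w : FreeGroup ℕ) (hw : w ≠ 1) :
    ∃ P' : ℕ → List (X × X), (∀ k, P k ⊆ P' k) ∧ (∀ k, PartIso (P' k)) ∧
      ∃ x y : X, x ≠ y ∧ EvalsTo P' w.toWord x y := by
  classical
  obtain ⟨-, -, hQ, -⟩ := id hX
  set L := w.toWord with hLdef
  set K : Finset ℕ := (L.map Prod.fst).toFinset with hKdef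
  set C₀ : List X := (K.toList.map fun k => (P k).map Prod.fst ++ (P k).map Prod.snd).flatten
    with hC₀def
  have hC₀mem : ∀ k ∈ K, ∀ pr ∈ P k, pr.1 ∈ C₀ ∧ pr.2 ∈ C₀ := by
    intro k hk pr hpr
    constructor
    · exact List.mem_flatten.mpr ⟨_, List.mem_map.mpr ⟨k, Finset.mem_toList.mpr hk, rfl⟩,
        List.mem_append.mpr (Or.inl (List.mem_map.mpr ⟨pr, hpr, rfl⟩))⟩
    · exact List.mem_flatten.mpr ⟨_, List.mem_map.mpr ⟨k, Finset.mem_toList.mpr hk, rfl⟩,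
        List.mem_append.mpr (Or.inr (List.mem_map.mpr ⟨pr, hpr, rfl⟩))⟩
  obtain ⟨R, hR, hbd⟩ := exists_bound hQ C₀
  obtain ⟨x, hx⟩ := fresh hX C₀ R hR.le hbd
  have hxC₀ : x ∉ C₀ := by
    intro h
    have := hx x h
    rw [dist_self] at this
    exact hR.ne this
  have hch := chain hX R hR P K (x :: C₀) x hP (List.mem_cons_self) ?_ ?_ ?_ ?_ L
    (toWord_chain' w) ?_
  · obtain ⟨P', C', y, hsub, hPI, -, -, -, -, -, -, hev, hne⟩ := hch
    have hL : L ≠ [] := by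
      intro h
      exact hw (FreeGroup.toWord_eq_nil_iff.mp (hLdef ▸ h))
    have hdyx := hne hL
    refine ⟨P', hsub, hPI, x, y, ?_, hev⟩
    intro h
    rw [← h, dist_self] at hdyx
    exact hR.ne hdyx
  · intro a ha b hb
    rcases List.mem_cons.mp ha with rfl | ha' <;> rcases List.mem_cons.mp hb with rfl | hb'
    · rw [dist_self]; positivity
    · rw [hx b hb']; linarith
    · rw [dist_comm, hx a ha']; linarith
    · exact hbd a ha' b hb'
  · intro a ha hne
    rcases List.mem_cons.mp ha with rfl | ha'
    · exact absurd rfl hne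
    · rw [dist_comm]; exact hx a ha'
  · intro k hk pr hpr
    obtain ⟨h1, h2⟩ := hC₀mem k hk pr hpr
    exact ⟨List.mem_cons_of_mem _ h1, List.mem_cons_of_mem _ h2⟩
  · intro k hk pr hpr
    obtain ⟨h1, h2⟩ := hC₀mem k hk pr hpr
    exact ⟨fun h => hxC₀ (h ▸ h1), fun h => hxC₀ (h ▸ h2)⟩
  · intro p hp
    exact List.mem_toFinset.mpr (List.mem_map.mpr ⟨p, hp, rfl⟩)

/-- The type of requirements. -/
abbrev EReq : Type := ((ℕ × ℕ) ⊕ (ℕ × ℕ)) ⊕ FreeGroup ℕ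

/-- Satisfaction of a requirement. -/
def ReqSat (eX : ℕ → X) (P : ℕ → List (X × X)) : EReq → Prop
  | .inl (.inl (k, n)) => ∃ c, (eX n, c) ∈ P k
  | .inl (.inr (k, n)) => ∃ a, (a, eX n) ∈ P k
  | .inr w => w = 1 ∨ ∃ x y : X, x ≠ y ∧ EvalsTo P w.toWord x y

theorem step (hX : IsRationalUrysohn X) (eX : ℕ → X) (P : ℕ → List (X × X))
    (hP : ∀ k, PartIso (P k)) (r : EReq) :
    ∃ P' : ℕ → List (X × X), (∀ k, P k ⊆ P' k) ∧ (∀ k, PartIso (P' k)) ∧ ReqSat eX P' r := by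
  classical
  rcases r with (⟨k, n⟩ | ⟨k, n⟩) | w
  · obtain ⟨z, hz⟩ := extend_dom hX (hP k) (eX n)
    refine ⟨Function.update P k ((eX n, z) :: P k), ?_, ?_, ?_⟩
    · intro k'
      by_cases h : k' = k
      · rw [h, Function.update_self]; exact List.subset_cons_self _ _
      · rw [Function.update_of_ne h]; exact List.Subset.refl _
    · intro k'
      by_cases h : k' = k
      · rw [h, Function.update_self]; exact hz
      · rw [Function.update_of_ne h]; exact hP k'
    · refine ⟨z, ?_⟩
      show _ ∈ Function.update P k ((eX n, z) :: P k) k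
      rw [Function.update_self]
      exact List.mem_cons_self
  · obtain ⟨z, hz⟩ := extend_ran hX (hP k) (eX n)
    refine ⟨Function.update P k ((z, eX n) :: P k), ?_, ?_, ?_⟩
    · intro k'
      by_cases h : k' = k
      · rw [h, Function.update_self]; exact List.subset_cons_self _ _
      · rw [Function.update_of_ne h]; exact List.Subset.refl _
    · intro k'
      by_cases h : k' = k
      · rw [h, Function.update_self]; exact hz
      · rw [Function.update_of_ne h]; exact hP k'
    · refine ⟨z, ?_⟩
      show _ ∈ Function.update P k ((z, eX n) :: P k) k
      rw [Function.update_self]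
      exact List.mem_cons_self
  · by_cases hw : w = 1
    · exact ⟨P, fun k => List.Subset.refl _, hP, Or.inl hw⟩
    · obtain ⟨P', h1, h2, h3⟩ := kill hX P hP w hw
      exact ⟨P', h1, h2, Or.inr h3⟩

/-- The recursive sequence of finite states. -/
noncomputable def seq (hX : IsRationalUrysohn X) (eX : ℕ → X) (ρ : ℕ → EReq)
    (P₀ : ℕ → List (X × X)) (h₀ : ∀ k, PartIso (P₀ k)) :
    ℕ → {P : ℕ → List (X × X) // ∀ k, PartIso (P k)}
  | 0 => ⟨P₀, h₀⟩
  | t + 1 =>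
    ⟨(step hX eX (seq hX eX ρ P₀ h₀ t).1 (seq hX eX ρ P₀ h₀ t).2 (ρ t)).choose,
     (step hX eX (seq hX eX ρ P₀ h₀ t).1 (seq hX eX ρ P₀ h₀ t).2 (ρ t)).choose_spec.2.1⟩

theorem seq_sub_succ (hX : IsRationalUrysohn X) (eX : ℕ → X) (ρ : ℕ → EReq)
    (P₀ : ℕ → List (X × X)) (h₀ : ∀ k, PartIso (P₀ k)) (t : ℕ) :
    ∀ k, (seq hX eX ρ P₀ h₀ t).1 k ⊆ (seq hX eX ρ P₀ h₀ (t + 1)).1 k :=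
  (step hX eX (seq hX eX ρ P₀ h₀ t).1 (seq hX eX ρ P₀ h₀ t).2 (ρ t)).choose_spec.1

theorem seq_sat (hX : IsRationalUrysohn X) (eX : ℕ → X) (ρ : ℕ → EReq)
    (P₀ : ℕ → List (X × X)) (h₀ : ∀ k, PartIso (P₀ k)) (t : ℕ) :
    ReqSat eX (seq hX eX ρ P₀ h₀ (t + 1)).1 (ρ t) :=
  (step hX eX (seq hX eX ρ P₀ h₀ t).1 (seq hX eX ρ P₀ h₀ t).2 (ρ t)).choose_spec.2.2

theorem seq_mono (hX : IsRationalUrysohn X) (eX : ℕ → X) (ρ : ℕ → EReq)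
    (P₀ : ℕ → List (X × X)) (h₀ : ∀ k, PartIso (P₀ k)) {t t' : ℕ} (h : t ≤ t') :
    ∀ k, (seq hX eX ρ P₀ h₀ t).1 k ⊆ (seq hX eX ρ P₀ h₀ t').1 k := by
  induction t' with
  | zero =>
    obtain rfl : t = 0 := Nat.le_zero.mp h
    exact fun k => List.Subset.refl _
  | succ t' ih =>
    rcases Nat.lt_or_ge t (t' + 1) with h1 | h2
    · intro k
      exact List.Subset.trans (ih (Nat.lt_succ_iff.mp h1) k) (seq_sub_succ hX eX ρ P₀ h₀ t' k)
    · obtain rfl : t = t' + 1 := le_antisymm h h2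
      exact fun k => List.Subset.refl _

theorem evalsTo_prod (P : ℕ → List (X × X)) (g : ℕ → X ≃ᵢ X)
    (hg : ∀ k, ∀ pr ∈ P k, g k pr.1 = pr.2) :
    ∀ (L : List (ℕ × Bool)) (x y : X), EvalsTo P L x y →
      (List.map (fun p : ℕ × Bool => bif p.2 then g p.1 else (g p.1)⁻¹) L).prod x = y := by
  intro L
  induction L with
  | nil =>
    intro x y h
    rw [List.map_nil, List.prod_nil]
    exact h ▸ rfl
  | cons p L ih =>
    obtain ⟨k, b⟩ := p
    rintro x y ⟨z, h1, h2⟩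
    rw [List.map_cons, List.prod_cons, IsometryEquiv.mul_apply, ih x z h1]
    cases b
    · have hgy : g k y = z := hg k (y, z) h2
      show (g k)⁻¹ z = y
      rw [← hgy]
      exact IsometryEquiv.inv_apply_self _ _
    · exact hg k (z, y) h2

open scoped Classical in
/-- The initial ("task") partial isometry attached to a potential pair of tuples. -/
noncomputable def taskList (t : Σ n : ℕ, (Fin n → X) × (Fin n → X)) : List (X × X) :=
  if ∀ i j, dist (t.2.1 i) (t.2.1 j) = dist (t.2.2 i) (t.2.2 j) then
    (List.finRange t.1).map fun i => (t.2.1 i, t.2.2 i)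
  else []

theorem taskList_partIso (t : Σ n : ℕ, (Fin n → X) × (Fin n → X)) : PartIso (taskList t) := by
  unfold taskList
  split_ifs with h
  · intro p hp q hq
    obtain ⟨i, -, rfl⟩ := List.mem_map.mp hp
    obtain ⟨j, -, rfl⟩ := List.mem_map.mp hq
    exact h i j
  · intro p hp
    simp at hp

theorem taskList_mem (t : Σ n : ℕ, (Fin n → X) × (Fin n → X))
    (h : ∀ i j, dist (t.2.1 i) (t.2.1 j) = dist (t.2.2 i) (t.2.2 j)) (i : Fin t.1) :
    (t.2.1 i, t.2.2 i) ∈ taskList t := by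
  unfold taskList
  rw [if_pos h]
  exact List.mem_map.mpr ⟨i, List.mem_finRange i, rfl⟩

end Stmt19

theorem stmt_19 (X : Type*) [MetricSpace X] (hX : IsRationalUrysohn X) :
    ∃ φ : FreeGroup ℕ →* (X ≃ᵢ X),
      Function.Injective φ ∧
      ∀ (n : ℕ) (α β : Fin n → X),
        (∀ i j : Fin n, dist (α i) (α j) = dist (β i) (β j)) →
        ∃ w : FreeGroup ℕ, ∀ i : Fin n, φ w (α i) = β i := by
  classical
  obtain ⟨hne, hcnt, hQ, -⟩ := id hX
  haveI : Nonempty X := hne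
  haveI : Countable X := hcnt
  haveI : Countable (FreeGroup ℕ) := FreeGroup.toWord_injective.countable
  obtain ⟨eX, heX⟩ := exists_surjective_nat X
  obtain ⟨τ, hτ⟩ := exists_surjective_nat (Σ n : ℕ, (Fin n → X) × (Fin n → X))
  obtain ⟨ρ, hρ⟩ := exists_surjective_nat Stmt19.EReq
  set P₀ : ℕ → List (X × X) := fun m => Stmt19.taskList (τ m) with hP₀def
  have h₀ : ∀ k, Stmt19.PartIso (P₀ k) := fun k => Stmt19.taskList_partIso (τ k)
  set S := Stmt19.seq hX eX ρ P₀ h₀ with hSdef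
  set Rel : ℕ → X → X → Prop := fun k a c => ∃ t, (a, c) ∈ (S t).1 k with hReldef
  have hmono : ∀ {t t'}, t ≤ t' → ∀ k, (S t).1 k ⊆ (S t').1 k :=
    fun h => Stmt19.seq_mono hX eX ρ P₀ h₀ h
  have hcommon : ∀ k a c a' c', Rel k a c → Rel k a' c' →
      ∃ t, (a, c) ∈ (S t).1 k ∧ (a', c') ∈ (S t).1 k := by
    rintro k a c a' c' ⟨t1, h1⟩ ⟨t2, h2⟩
    exact ⟨max t1 t2, hmono (le_max_left t1 t2) k h1, hmono (le_max_right t1 t2) k h2⟩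
  have huniq2 : ∀ k a c c', Rel k a c → Rel k a c' → c = c' := by
    intro k a c c' h1 h2
    obtain ⟨t, hm1, hm2⟩ := hcommon k a c a c' h1 h2
    exact Stmt19.PartIso.eq_snd ((S t).2 k) hm1 hm2
  have huniq1 : ∀ k a a' c, Rel k a c → Rel k a' c → a = a' := by
    intro k a a' c h1 h2
    obtain ⟨t, hm1, hm2⟩ := hcommon k a c a' c h1 h2
    exact Stmt19.PartIso.eq_fst ((S t).2 k) hm1 hm2
  have hdist : ∀ k a c a' c', Rel k a c → Rel k a' c' → dist a a' = dist c c' := by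
    intro k a c a' c' h1 h2
    obtain ⟨t, hm1, hm2⟩ := hcommon k a c a' c' h1 h2
    exact (S t).2 k _ hm1 _ hm2
  have htotal : ∀ k a, ∃ c, Rel k a c := by
    intro k a
    obtain ⟨n, rfl⟩ := heX a
    obtain ⟨t, ht⟩ := hρ (Sum.inl (Sum.inl (k, n)))
    have hs := Stmt19.seq_sat hX eX ρ P₀ h₀ t
    rw [ht] at hs
    obtain ⟨c, hc⟩ := hs
    exact ⟨c, t + 1, hc⟩
  have hsurj : ∀ k c, ∃ a, Rel k a c := by
    intro k c
    obtain ⟨n, rfl⟩ := heX c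
    obtain ⟨t, ht⟩ := hρ (Sum.inl (Sum.inr (k, n)))
    have hs := Stmt19.seq_sat hX eX ρ P₀ h₀ t
    rw [ht] at hs
    obtain ⟨a, ha⟩ := hs
    exact ⟨a, t + 1, ha⟩
  choose gfun hg using htotal
  have hgraph : ∀ k a c, Rel k a c → gfun k a = c := fun k a c h => huniq2 k a _ c (hg k a) h
  have hbij : ∀ k, Function.Bijective (gfun k) := by
    intro k
    constructor
    · intro a a' h
      exact huniq1 k a a' (gfun k a') (h ▸ hg k a) (hg k a')
    · intro c
      obtain ⟨a, ha⟩ := hsurj k c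
      exact ⟨a, hgraph k a c ha⟩
  set giso : ℕ → X ≃ᵢ X := fun k =>
    ⟨Equiv.ofBijective (gfun k) (hbij k),
     Isometry.of_dist_eq (fun a a' => (hdist k a _ a' _ (hg k a) (hg k a')).symm)⟩ with hgisodef
  have hgiso : ∀ k a c, Rel k a c → giso k a = c := hgraph
  have hgr : ∀ t k, ∀ pr ∈ (S t).1 k, giso k pr.1 = pr.2 := by
    intro t k pr hpr
    exact hgiso k pr.1 pr.2 ⟨t, by rwa [Prod.mk.eta]⟩
  refine ⟨FreeGroup.lift giso, ?_, ?_⟩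
  · rw [injective_iff_map_eq_one]
    intro w hw1
    by_contra hw
    obtain ⟨t, ht⟩ := hρ (Sum.inr w)
    have hs := Stmt19.seq_sat hX eX ρ P₀ h₀ t
    rw [ht] at hs
    rcases hs with h1 | ⟨x, y, hxy, hev⟩
    · exact hw h1
    have hp := Stmt19.evalsTo_prod (S (t + 1)).1 giso (hgr (t + 1)) w.toWord x y hev
    have hwx : FreeGroup.lift giso w x = y := by
      conv_lhs => rw [← FreeGroup.mk_toWord (x := w), FreeGroup.lift_mk]
      exact hp
    rw [hw1] at hwx
    exact hxy hwx
  · intro n α β hd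
    obtain ⟨m, hm⟩ := hτ ⟨n, α, β⟩
    refine ⟨FreeGroup.of m, fun i => ?_⟩
    have h0 : (α i, β i) ∈ P₀ m := by
      show (α i, β i) ∈ Stmt19.taskList (τ m)
      rw [hm]
      exact Stmt19.taskList_mem ⟨n, α, β⟩ hd i
    have hrel : Rel m (α i) (β i) := ⟨0, h0⟩
    have hlof : (FreeGroup.lift giso) (FreeGroup.of m) = giso m := FreeGroup.lift_apply_of
    rw [hlof]
    exact hgiso m (α i) (β i) hrel
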